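/- Let G be a group and H a subgroup with G = H·Z_n(G). Then the iterated commutator subgroup [H,G,G,...,G] (with n copies of G), i.e. [_nH,G], equals γ_{n+1}(H), the (n+1)-st term of the lower central series of H. -/

import Mathlib

/-!
Write `L k` for the lower central series of `H` computed inside `G`. One inclusion holds because
`[L k, H] ≤ [L k, G]`. For the other, show `[_k H, G] ≤ L k · Z_m(G)` whenever `k + m = n`, by
induction on `k`. In the inductive step, with `c ∈ L k`, `w ∈ Z_{m+1}(G)` and `g = h z`
(`h ∈ H`, `z ∈ Z_n(G)`), the commutator `[c w, h z]` is `[c, h] ∈ L (k+1)` times conjugates of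
`[w, h z] ∈ Z_m(G)` and `[c, z]`; the latter lies in `Z_m(G)` because
`[γ_{i+1}(G), Z_{i+j+1}(G)] ≤ Z_j(G)`, a consequence of the three subgroup lemma.
-/

open scoped commutatorElement

namespace Subgroup

variable {G : Type*} [Group G]

theorem commutator_commutator_le_of_rotate {H₁ H₂ H₃ N : Subgroup G} [N.Normal]
    (h₁ : ⁅⁅H₂, H₃⁆, H₁⁆ ≤ N) (h₂ : ⁅⁅H₃, H₁⁆, H₂⁆ ≤ N) : ⁅⁅H₁, H₂⁆, H₃⁆ ≤ N := by
  simp only [← QuotientGroup.ker_mk' N, ← map_eq_bot_iff, map_commutator] at h₁ h₂ ⊢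
  exact commutator_commutator_eq_bot_of_rotate h₁ h₂

theorem commutator_lowerCentralSeries_upperCentralSeries_le (i j : ℕ) :
    ⁅(⊤ : Subgroup G).lowerCentralSeries i, upperCentralSeries G (i + j + 1)⁆ ≤
      upperCentralSeries G j := by
  induction i generalizing j with
  | zero =>
    rw [commutator_comm, zero_add]
    exact commutator_upperCentralSeries_top_le G j
  | succ i ih =>
    apply commutator_commutator_le_of_rotate
    · calc ⁅⁅⊤, upperCentralSeries G (i + 1 + j + 1)⁆, lowerCentralSeries ⊤ i⁆
          ≤ ⁅upperCentralSeries G (i + j + 1), lowerCentralSeries ⊤ i⁆ := by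
            rw [commutator_comm ⊤, show i + 1 + j + 1 = i + j + 1 + 1 by omega]
            exact commutator_mono (commutator_upperCentralSeries_top_le G _) le_rfl
        _ ≤ upperCentralSeries G j := by
            rw [commutator_comm]
            exact ih j
    · calc ⁅⁅upperCentralSeries G (i + 1 + j + 1), lowerCentralSeries ⊤ i⁆, ⊤⁆
          ≤ ⁅upperCentralSeries G (j + 1), ⊤⁆ := by
            rw [commutator_comm (upperCentralSeries G _),
              show i + 1 + j + 1 = i + (j + 1) + 1 by omega]
            exact commutator_mono (ih (j + 1)) le_rfl
        _ ≤ upperCentralSeries G j := commutator_upperCentralSeries_top_le G j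

theorem commutatorElement_mul_mul_mem_commutator_sup {A B N : Subgroup G} [N.Normal]
    {c w h z : G} (hc : c ∈ A) (hh : h ∈ B) (hw : ⁅w, h * z⁆ ∈ N) (hz : ⁅c, z⁆ ∈ N) :
    ⁅c * w, h * z⁆ ∈ ⁅A, B⁆ ⊔ N := by
  rw [commutatorElement_mul_left_eq_conj_mul c w, commutatorElement_mul_right_eq_mul_conj c h z]
  have hwc : c * ⁅w, h * z⁆ * c⁻¹ ∈ ⁅A, B⁆ ⊔ N :=
    mem_sup_right (Normal.conj_mem ‹_› _ hw c)
  have hch : ⁅c, h⁆ ∈ ⁅A, B⁆ ⊔ N := mem_sup_left (commutator_mem_commutator hc hh)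
  have hzh : h * ⁅c, z⁆ * h⁻¹ ∈ ⁅A, B⁆ ⊔ N := mem_sup_right (Normal.conj_mem ‹_› _ hz h)
  simpa only [mul_assoc] using mul_mem hwc (mul_mem hch hzh)

end Subgroup

/-- `[_k H, G]`: the left-normed iterated commutator subgroup `[H, G, ..., G]`
with `k` copies of `G`. -/
def iteratedCommSubgroup {G : Type*} [Group G] (H : Subgroup G) : ℕ → Subgroup G
  | 0 => H
  | k + 1 => ⁅iteratedCommSubgroup H k, (⊤ : Subgroup G)⁆

namespace Subgroup

variable {G : Type*} [Group G]

theorem lowerCentralSeries_le_iteratedCommSubgroup (H : Subgroup G) (k : ℕ) :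
    H.lowerCentralSeries k ≤ iteratedCommSubgroup H k := by
  induction k with
  | zero => exact le_rfl
  | succ k ih => exact commutator_mono ih le_top

theorem iteratedCommSubgroup_le_lowerCentralSeries_sup_upperCentralSeries {H : Subgroup G} {n : ℕ}
    (hHZ : ∀ g : G, ∃ h ∈ H, ∃ z ∈ upperCentralSeries G n, g = h * z) {k m : ℕ} (hkm : k + m = n) :
    iteratedCommSubgroup H k ≤ H.lowerCentralSeries k ⊔ upperCentralSeries G m := by
  induction k generalizing m with
  | zero => exact le_sup_left
  | succ k ih =>
    refine commutator_le.mpr fun x hx g _ ↦ ?_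
    obtain ⟨c, hc, w, hw, rfl⟩ := mem_sup_of_normal_right.mp (ih (m := m + 1) (by omega) hx)
    obtain ⟨h, hh, z, hz, rfl⟩ := hHZ g
    refine commutatorElement_mul_mul_mem_commutator_sup hc hh
      (mem_upperCentralSeries_succ_iff.mp hw _) ?_
    rw [← hkm, add_right_comm] at hz
    exact commutator_lowerCentralSeries_upperCentralSeries_le k m
      (commutator_mem_commutator (lowerCentralSeries_mono k le_top hc) hz)

end Subgroup

theorem iteratedCommSubgroup_eq_lowerCentralSeries
    {G : Type*} [Group G] (H : Subgroup G) (n : ℕ)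
    (hHZ : ∀ g : G, ∃ h ∈ H, ∃ z ∈ upperCentralSeries G n, g = h * z) :
    iteratedCommSubgroup H n = (Subgroup.lowerCentralSeries (⊤ : Subgroup H) n).map H.subtype := by
  rw [Subgroup.top_subtype_lowerCentralSeries]
  refine le_antisymm ?_ (H.lowerCentralSeries_le_iteratedCommSubgroup n)
  simpa using Subgroup.iteratedCommSubgroup_le_lowerCentralSeries_sup_upperCentralSeries hHZ
    (add_zero n)
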